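/- Let d ≥ 1 and k ≥ 2, and let G = (V,D) be a graph with no isolated vertices whose edge set D is a k-fold R_d-circuit such that G is R_d-connected and the set of technicolour vertices of G is exactly {u,v}. (i) If uv ∈ D, then there exist k R_d-circuits C_1,…,C_k, each containing the edge uv, such that V(C_i) ∩ V(C_j) = {u,v} and E(C_i) ∩ E(C_j) = {uv} for all i ≠ j, and G = C_1 ∪ ⋯ ∪ C_k. (ii) If uv ∉ D, then there exist k+1 R_d-circuits C_1,…,C_{k+1}, each containing the edge uv, such that V(C_i) ∩ V(C_j) = {u,v} and E(C_i) ∩ E(C_j) = {uv} for all i ≠ j, and G = (C_1 ∪ ⋯ ∪ C_{k+1}) − uv. -/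

import Mathlib

open scoped BigOperators

/-- The row of the `d`-dimensional rigidity matrix of a realisation `p : V → ℝ^d`
indexed by the (unordered) edge `e`. -/
noncomputable def rigRow (d : ℕ) {V : Type*} [DecidableEq V]
    (p : V → Fin d → ℝ) (e : Sym2 V) : V × Fin d → ℝ :=
  Sym2.lift
    ⟨fun u v wi =>
        (((if wi.1 = u then (1 : ℝ) else 0) - (if wi.1 = v then (1 : ℝ) else 0)) *
          (p u wi.2 - p v wi.2)),
      fun u v => by funext wi; ring⟩ e

/-- A realisation is generic if the coordinates of the points form an algebraically
independent set over `ℚ`. -/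
def Generic (d : ℕ) {V : Type*} (p : V → Fin d → ℝ) : Prop :=
  AlgebraicIndependent ℚ fun vi : V × Fin d => p vi.1 vi.2

/-- `rrk d p F` : the rank of the set of rows of the rigidity matrix of `(K_V, p)`
indexed by the edges in `F`.  For generic `p` this is the rank function `r_d` of
the generic `d`-dimensional rigidity matroid. -/
noncomputable def rrk (d : ℕ) {V : Type*} [Fintype V] [DecidableEq V]
    (p : V → Fin d → ℝ) (F : Set (Sym2 V)) : ℕ :=
  Module.finrank ℝ (Submodule.span ℝ (rigRow d p '' F))

/-- `D` is a `k`-fold circuit (with respect to the realisation `p`) :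
`r (D \ {f}) = r D` for every `f ∈ D`, and `r D = |D| - k`. -/
def IsKFoldCircuit (d : ℕ) {V : Type*} [Fintype V] [DecidableEq V]
    (p : V → Fin d → ℝ) (D : Finset (Sym2 V)) (k : ℕ) : Prop :=
  (∀ f ∈ D, rrk d p (↑D \ {f}) = rrk d p ↑D) ∧ rrk d p ↑D + k = D.card

/-- An `R_d`-circuit: `r C = |C| - 1` and `r (C \ {f}) = r C` for all `f ∈ C`. -/
def IsCircuit (d : ℕ) {V : Type*} [Fintype V] [DecidableEq V]
    (p : V → Fin d → ℝ) (C : Finset (Sym2 V)) : Prop :=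
  IsKFoldCircuit d p C 1

/-- `A` is a part of the principal partition of the `k`-fold circuit `D`:
the parts are the sets `D \ B` where `B` runs over the `(k-1)`-fold circuits
contained in `D`. -/
def IsPrincipalPart (d : ℕ) {V : Type*} [Fintype V] [DecidableEq V]
    (p : V → Fin d → ℝ) (D : Finset (Sym2 V)) (k : ℕ) (A : Finset (Sym2 V)) : Prop :=
  ∃ B ⊆ D, IsKFoldCircuit d p B (k - 1) ∧ A = D \ B

/-- Closure in the rigidity matroid: all edges of `K_V` whose addition to `F`
does not increase the rank. -/
def rcl (d : ℕ) {V : Type*} [Fintype V] [DecidableEq V]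
    (p : V → Fin d → ℝ) (F : Set (Sym2 V)) : Set (Sym2 V) :=
  {e | ¬ e.IsDiag ∧ rrk d p (insert e F) = rrk d p F}

/-- A `k`-fold circuit `D` with principal partition `A_1, …, A_ℓ` is balanced if
`r_d (⋂ i, cl_d (D \ A_i)) = ℓ - k`. -/
def IsBalanced (d : ℕ) {V : Type*} [Fintype V] [DecidableEq V]
    (p : V → Fin d → ℝ) (D : Finset (Sym2 V)) (k : ℕ) : Prop :=
  rrk d p (⋂ A ∈ {A | IsPrincipalPart d p D k A}, rcl d p ↑(D \ A)) + k =
    Set.ncard {A | IsPrincipalPart d p D k A}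

/-- A vertex is monochromatic if all edges of `D` incident with it lie in a single
part of the principal partition (and technicolour otherwise). -/
def Monochromatic (d : ℕ) {V : Type*} [Fintype V] [DecidableEq V]
    (p : V → Fin d → ℝ) (D : Finset (Sym2 V)) (k : ℕ) (w : V) : Prop :=
  ∃ A, IsPrincipalPart d p D k A ∧ ∀ e ∈ D, w ∈ e → e ∈ A

/-- The graph `(W, E)` is `R_d`-rigid: it is a complete graph on at most `d+1`
vertices, or `r_d(E) = d|W| - (d+1 choose 2)`. -/
def IsRigidOn (d : ℕ) {V : Type*} [Fintype V] [DecidableEq V]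
    (p : V → Fin d → ℝ) (W : Finset V) (E : Finset (Sym2 V)) : Prop :=
  (W.card ≤ d + 1 ∧ ∀ u ∈ W, ∀ w ∈ W, u ≠ w → s(u, w) ∈ E) ∨
    (rrk d p ↑E : ℤ) + ((d + 1).choose 2 : ℤ) = (d : ℤ) * (W.card : ℤ)

/-- The edge set of the cone of (the graph with edge set) `D` over a new vertex,
realised as `none : Option V`. -/
def coneEdges {V : Type*} [Fintype V] [DecidableEq V] (D : Finset (Sym2 V)) :
    Finset (Sym2 (Option V)) :=
  D.image (Sym2.map Option.some) ∪
    Finset.univ.image fun u : V => s((Option.some u : Option V), (none : Option V))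

/-- The degree of the vertex `w` in the edge set `D`. -/
def degIn {V : Type*} [Fintype V] [DecidableEq V] (D : Finset (Sym2 V)) (w : V) : ℕ :=
  (D.filter fun e => w ∈ e).card

/-- The set of vertices incident with an edge of `F`. -/
def esupp {V : Type*} [Fintype V] [DecidableEq V] (F : Finset (Sym2 V)) : Finset V :=
  Finset.univ.filter fun w => ∃ e ∈ F, w ∈ e

/-!
A *stress* of an edge set is a linear dependency among its rigidity-matrix rows; `D` is a
`k`-fold circuit exactly when its stresses form a `k`-dimensional space and every edge carries one.
On a part `A` of the principal partition a stress of `D` vanishing at one edge vanishes on all of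
`A`, so every stress of `D` restricts to `A` as a multiple of one fixed `l_A`. Every vertex other
than `u, v` is monochromatic, so the load `∑_{e ∈ A} l_A(e) r_e` lives on `u, v`; being orthogonal
to translations and rotations it is a multiple `t_A r_{uv}`. `R_d`-connectivity makes every part
independent, whence `t_A ≠ 0`. The stresses of `D` are then the combinations `∑ c_A l_A` with
`∑ c_A t_A = 0`, so there are `k + 1` parts; `A + uv` is a circuit with stress
`l_A - t_A χ_{uv}`, and if `uv ∈ D` its own part is `{uv}`.
-/

open Finset Module

section PartCombination

variable {K ι : Type*} [Field K] [DecidableEq ι] {D : Finset ι} (P : Finpartition D)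
  (l : Finset ι → ι → K)

noncomputable def partCombination : (P.parts → K) →ₗ[K] ι → K :=
  Fintype.linearCombination K fun A : P.parts => (A : Set ι).indicator (l A)

theorem partCombination_apply_of_mem {A : Finset ι} (hA : A ∈ P.parts) {e : ι} (he : e ∈ A)
    (c : P.parts → K) : partCombination P l c e = c ⟨A, hA⟩ * l A e := by
  rw [partCombination, Fintype.linearCombination_apply, Finset.sum_apply,
    Finset.sum_eq_single ⟨A, hA⟩]
  · simp [he]
  · intro B _ hBA
    have heB : e ∉ (B : Finset ι) := fun heB =>
      hBA (Subtype.ext (P.eq_of_mem_parts B.2 hA heB he))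
    simp [heB]
  · simp

theorem partCombination_apply_of_notMem {e : ι} (he : e ∉ D) (c : P.parts → K) :
    partCombination P l c e = 0 := by
  rw [partCombination, Fintype.linearCombination_apply, Finset.sum_apply]
  refine Finset.sum_eq_zero fun A _ => ?_
  simp [show e ∉ (A : Finset ι) from fun heA => he (P.subset A.2 heA)]

theorem partCombination_injective (hl : ∀ A ∈ P.parts, ∀ e ∈ A, l A e ≠ 0) :
    Function.Injective (partCombination P l) := by
  rw [← LinearMap.ker_eq_bot, Submodule.eq_bot_iff]
  intro c hc
  funext A
  obtain ⟨e, he⟩ := P.nonempty_of_mem_parts A.2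
  have := congrFun hc e
  rw [partCombination_apply_of_mem P l A.2 he] at this
  exact (mul_eq_zero.mp this).resolve_right (hl A A.2 e he)

end PartCombination

theorem Finpartition.insert_sup_parts_erase {α : Type*} [DecidableEq α] {D : Finset α}
    (P : Finpartition D) {g : α} (hg : {g} ∈ P.parts) :
    insert g ((P.parts.erase {g}).sup id) = D := by
  conv_rhs => rw [← P.sup_parts, ← insert_erase hg]
  rw [sup_insert, insert_eq]
  rfl

section Stresses

variable (K : Type*) {ι W : Type*} [Field K] [Fintype ι] [AddCommGroup W] [Module K W]
  (r : ι → W)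

def stresses (F : Finset ι) : Submodule K (ι → K) where
  carrier := {l | (∀ e ∉ F, l e = 0) ∧ Fintype.linearCombination K r l = 0}
  add_mem' ha hb :=
    ⟨fun e he => by simp [ha.1 e he, hb.1 e he], by rw [map_add, ha.2, hb.2, add_zero]⟩
  zero_mem' := ⟨fun _ _ => rfl, map_zero _⟩
  smul_mem' c l hl := ⟨fun e he => by simp [hl.1 e he], by rw [map_smul, hl.2, smul_zero]⟩

variable {K r}

theorem stresses_mono {F G : Finset ι} (h : F ⊆ G) : stresses K r F ≤ stresses K r G :=
  fun _ hl => ⟨fun e he => hl.1 e fun heF => he (h heF), hl.2⟩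

theorem linearCombination_eq_of_support {F : Finset ι} {l : ι → K} (hl : ∀ e ∉ F, l e = 0) :
    Fintype.linearCombination K r l =
      Fintype.linearCombination K (fun e : F => r e) fun e => l e := by
  simp only [Fintype.linearCombination_apply]
  rw [Finset.sum_coe_sort F fun e => l e • r e]
  exact (Finset.sum_subset (subset_univ F) fun e _ he => by rw [hl e he, zero_smul]).symm

variable (K r) in
theorem finrank_span_image_add_finrank_stresses (F : Finset ι) :
    finrank K (Submodule.span K (r '' F)) + finrank K (stresses K r F) = F.card := by
  classical
  set h := Fintype.linearCombination K fun e : F => r e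
  have hrange : LinearMap.range h = Submodule.span K (r '' F) := by
    rw [Fintype.range_linearCombination, Set.image_eq_range]
    rfl
  let restrict : stresses K r F ≃ₗ[K] LinearMap.ker h :=
    { toFun x := ⟨fun e => x.1 e, by
        rw [LinearMap.mem_ker, ← linearCombination_eq_of_support x.2.1]; exact x.2.2⟩
      map_add' _ _ := rfl
      map_smul' _ _ := rfl
      invFun c := ⟨fun i => if hi : i ∈ F then c.1 ⟨i, hi⟩ else 0, fun i hi => dif_neg hi, by
        rw [linearCombination_eq_of_support fun i hi => dif_neg hi]
        simp⟩
      left_inv x := by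
        ext i
        by_cases hi : i ∈ F
        · simp [hi]
        · simp [hi, x.2.1 i hi]
      right_inv c := by ext; simp }
  rw [← hrange, restrict.finrank_eq, LinearMap.finrank_range_add_finrank_ker,
    finrank_fintype_fun_eq_card, Fintype.card_coe]

variable (K r) in
open Classical in
noncomputable def stressSupport (F : Finset ι) : Finset ι :=
  {e ∈ F | ∃ l ∈ stresses K r F, l e ≠ 0}

theorem mem_stressSupport {F : Finset ι} {e : ι} :
    e ∈ stressSupport K r F ↔ e ∈ F ∧ ∃ l ∈ stresses K r F, l e ≠ 0 := by
  classical
  simp [stressSupport]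

theorem stresses_stressSupport (F : Finset ι) :
    stresses K r (stressSupport K r F) = stresses K r F := by
  refine le_antisymm (stresses_mono fun e he => (mem_stressSupport.mp he).1)
    fun l hl => ⟨fun e he => ?_, hl.2⟩
  by_contra hle
  exact he (mem_stressSupport.mpr ⟨by_contra fun heF => hle (hl.1 e heF), l, hl, hle⟩)

variable [DecidableEq ι]

theorem mem_stresses_erase {F : Finset ι} {f : ι} {l : ι → K} :
    l ∈ stresses K r (F.erase f) ↔ l ∈ stresses K r F ∧ l f = 0 := by
  refine ⟨fun hl => ⟨stresses_mono (erase_subset f F) hl, hl.1 f (notMem_erase f F)⟩,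
    fun ⟨hl, hlf⟩ => ⟨fun e he => ?_, hl.2⟩⟩
  by_cases hef : e = f
  · rwa [hef]
  · exact hl.1 e fun heF => he (mem_erase.mpr ⟨hef, heF⟩)

theorem finrank_stresses_erase_add_one {F : Finset ι} {f : ι}
    (h : ∃ l ∈ stresses K r F, l f ≠ 0) :
    finrank K (stresses K r (F.erase f)) + 1 = finrank K (stresses K r F) := by
  set ψ := (LinearMap.proj f : (ι → K) →ₗ[K] K) ∘ₗ (stresses K r F).subtype
  have hker : LinearMap.ker ψ = (stresses K r (F.erase f)).comap (stresses K r F).subtype := by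
    ext x
    simp [ψ, mem_stresses_erase, x.2]
  have hrange : finrank K (LinearMap.range ψ) = 1 := by
    obtain ⟨l, hl, hlf⟩ := h
    rw [LinearMap.range_eq_top.mpr fun c => ⟨(c / l f) • ⟨l, hl⟩, by simp [ψ, hlf]⟩,
      finrank_top, finrank_self]
  rw [← LinearMap.finrank_range_add_finrank_ker ψ, hrange, hker,
    (Submodule.comapSubtypeEquivOfLe (stresses_mono (erase_subset f F))).finrank_eq, add_comm]

theorem stresses_erase_eq {F : Finset ι} {f : ι} (h : ∀ l ∈ stresses K r F, l f = 0) :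
    stresses K r (F.erase f) = stresses K r F :=
  le_antisymm (stresses_mono (erase_subset f F)) fun l hl => mem_stresses_erase.mpr ⟨hl, h l hl⟩

theorem finrank_span_diff_singleton_eq_iff {F : Finset ι} {f : ι} (hf : f ∈ F) :
    finrank K (Submodule.span K (r '' (↑F \ {f}))) = finrank K (Submodule.span K (r '' F)) ↔
      ∃ l ∈ stresses K r F, l f ≠ 0 := by
  have hF := finrank_span_image_add_finrank_stresses K r F
  have hFf := finrank_span_image_add_finrank_stresses K r (F.erase f)
  rw [coe_erase] at hFf
  have hcard := card_erase_add_one hf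
  constructor
  · intro hr
    by_contra! h
    rw [stresses_erase_eq h] at hFf
    omega
  · intro h
    have := finrank_stresses_erase_add_one h
    omega

theorem stresses_insert_eq_span {A : Finset ι} {g : ι} (hA : stresses K r A = ⊥) {κ : ι → K}
    (hκ : κ ∈ stresses K r (insert g A)) (hκg : κ g ≠ 0) :
    stresses K r (insert g A) = K ∙ κ := by
  refine le_antisymm (fun x hx => ?_) ((Submodule.span_singleton_le_iff_mem _ _).mpr hκ)
  have hsub : x - (x g / κ g) • κ ∈ stresses K r A := by
    refine stresses_mono (erase_subset g A) ?_
    rw [← erase_insert_eq_erase, mem_stresses_erase]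
    refine ⟨sub_mem hx (Submodule.smul_mem _ _ hκ), ?_⟩
    simp [hκg]
  rw [hA, Submodule.mem_bot, sub_eq_zero] at hsub
  exact Submodule.mem_span_singleton.mpr ⟨_, hsub.symm⟩

theorem eq_singleton_of_stresses_eq_bot {A : Finset ι} {g : ι} (hA : stresses K r A = ⊥)
    (hg : g ∈ A) {l : ι → K} (hl : ∀ e ∈ A, l e ≠ 0) {t : K}
    (hload : Fintype.linearCombination K r ((A : Set ι).indicator l) = t • r g) : A = {g} := by
  have hstress : (A : Set ι).indicator l - Pi.single g t ∈ stresses K r A := by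
    refine ⟨fun e he => ?_, by simp [hload]⟩
    simp [he, show e ≠ g from fun h => he (h ▸ hg)]
  rw [hA, Submodule.mem_bot, sub_eq_zero] at hstress
  refine eq_singleton_iff_unique_mem.mpr ⟨hg, fun e he => by_contra fun heg => hl e he ?_⟩
  simpa [he, heg] using congrFun hstress e

variable {D : Finset ι} {P : Finpartition D} {l : Finset ι → ι → K} {t : Finset ι → K} {w : W}

theorem linearCombination_partCombination
    (hload : ∀ A ∈ P.parts, Fintype.linearCombination K r ((A : Set ι).indicator (l A)) = t A • w)
    (c : P.parts → K) :
    Fintype.linearCombination K r (partCombination P l c) =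
      Fintype.linearCombination K (fun A : P.parts => t A) c • w := by
  rw [partCombination, Fintype.linearCombination_apply K (fun A : P.parts => _), map_sum,
    Fintype.linearCombination_apply K (fun A : P.parts => t A), Finset.sum_smul]
  refine Finset.sum_congr rfl fun A _ => ?_
  rw [map_smul, hload A A.2, smul_eq_mul, mul_smul]

theorem stresses_eq_map_partCombination (hw : w ≠ 0)
    (hl : ∀ A ∈ P.parts, ∀ x ∈ stresses K r D, ∃ c, ∀ e ∈ A, x e = c * l A e)
    (hload : ∀ A ∈ P.parts, Fintype.linearCombination K r ((A : Set ι).indicator (l A)) = t A • w) :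
    stresses K r D =
      (LinearMap.ker (Fintype.linearCombination K fun A : P.parts => t A)).map
        (partCombination P l) := by
  apply le_antisymm
  · intro x hx
    choose c hc using fun A : P.parts => hl A A.2 x hx
    have hxc : partCombination P l c = x := by
      funext e
      by_cases he : e ∈ D
      · obtain ⟨A, hA, heA⟩ := P.exists_mem he
        rw [partCombination_apply_of_mem P l hA heA, hc ⟨A, hA⟩ e heA]
      · rw [partCombination_apply_of_notMem P l he, hx.1 e he]
    refine ⟨c, ?_, hxc⟩
    have := hx.2
    rw [← hxc, linearCombination_partCombination hload, smul_eq_zero] at this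
    exact this.resolve_right hw
  · rintro _ ⟨c, hc, rfl⟩
    refine ⟨fun e he => partCombination_apply_of_notMem P l he c, ?_⟩
    rw [linearCombination_partCombination hload, LinearMap.mem_ker.mp hc, zero_smul]

theorem finrank_stresses_add_one_eq_card (hw : w ≠ 0)
    (hl_ne : ∀ A ∈ P.parts, ∀ e ∈ A, l A e ≠ 0)
    (hl : ∀ A ∈ P.parts, ∀ x ∈ stresses K r D, ∃ c, ∀ e ∈ A, x e = c * l A e)
    (hload : ∀ A ∈ P.parts, Fintype.linearCombination K r ((A : Set ι).indicator (l A)) = t A • w)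
    (ht : ∃ A ∈ P.parts, t A ≠ 0) :
    finrank K (stresses K r D) + 1 = P.parts.card := by
  set φ := Fintype.linearCombination K fun A : P.parts => t A
  obtain ⟨A, hA, htA⟩ := ht
  have hφ : finrank K (LinearMap.range φ) = 1 := by
    rw [LinearMap.range_eq_top.mpr fun a => ⟨Pi.single ⟨A, hA⟩ (a / t A), by simp [φ, htA]⟩,
      finrank_top, finrank_self]
  rw [stresses_eq_map_partCombination hw hl hload,
    ← (Submodule.equivMapOfInjective _ (partCombination_injective P l hl_ne) _).finrank_eq,
    ← hφ, add_comm, LinearMap.finrank_range_add_finrank_ker, finrank_fintype_fun_eq_card,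
    Fintype.card_coe]

end Stresses

section KFoldCircuit

variable {d : ℕ} {V : Type*} [Fintype V] [DecidableEq V] {p : V → Fin d → ℝ}
  {A A' B B' C D : Finset (Sym2 V)} {k : ℕ}

theorem isKFoldCircuit_iff :
    IsKFoldCircuit d p D k ↔ finrank ℝ (stresses ℝ (rigRow d p) D) = k ∧
      ∀ f ∈ D, ∃ l ∈ stresses ℝ (rigRow d p) D, l f ≠ 0 := by
  have h := finrank_span_image_add_finrank_stresses ℝ (rigRow d p) D
  unfold IsKFoldCircuit rrk
  constructor
  · rintro ⟨hf, hk⟩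
    exact ⟨by omega, fun f hfD => (finrank_span_diff_singleton_eq_iff hfD).mp (hf f hfD)⟩
  · rintro ⟨hk, hf⟩
    exact ⟨fun f hfD => (finrank_span_diff_singleton_eq_iff hfD).mpr (hf f hfD), by omega⟩

theorem IsKFoldCircuit.finrank_stresses_erase (hD : IsKFoldCircuit d p D k) {f : Sym2 V}
    (hf : f ∈ D) : finrank ℝ (stresses ℝ (rigRow d p) (D.erase f)) + 1 = k := by
  obtain ⟨hk, hstress⟩ := isKFoldCircuit_iff.mp hD
  rw [finrank_stresses_erase_add_one (hstress f hf), hk]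

theorem IsKFoldCircuit.subset_of_stresses_le (hB : IsKFoldCircuit d p B k)
    (h : stresses ℝ (rigRow d p) B ≤ stresses ℝ (rigRow d p) B') : B ⊆ B' := by
  intro f hf
  obtain ⟨l, hl, hlf⟩ := (isKFoldCircuit_iff.mp hB).2 f hf
  exact by_contra fun hfB' => hlf ((h hl).1 f hfB')

theorem IsCircuit.eq_zero_of_apply_eq_zero (hC : IsCircuit d p C) {x : Sym2 V → ℝ}
    (hx : x ∈ stresses ℝ (rigRow d p) C) {e : Sym2 V} (he : e ∈ C) (hxe : x e = 0) : x = 0 := by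
  have hbot : stresses ℝ (rigRow d p) (C.erase e) = ⊥ :=
    Submodule.finrank_eq_zero.mp (by have := IsKFoldCircuit.finrank_stresses_erase hC he; omega)
  have hxC : x ∈ stresses ℝ (rigRow d p) (C.erase e) := mem_stresses_erase.mpr ⟨hx, hxe⟩
  rwa [hbot, Submodule.mem_bot] at hxC

theorem isKFoldCircuit_stressSupport (F : Finset (Sym2 V)) :
    IsKFoldCircuit d p (stressSupport ℝ (rigRow d p) F)
      (finrank ℝ (stresses ℝ (rigRow d p) F)) := by
  rw [isKFoldCircuit_iff, stresses_stressSupport]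
  exact ⟨rfl, fun f hf => (mem_stressSupport.mp hf).2⟩

theorem IsKFoldCircuit.exists_isPrincipalPart_mem (hD : IsKFoldCircuit d p D k) {f : Sym2 V}
    (hf : f ∈ D) : ∃ A, IsPrincipalPart d p D k A ∧ f ∈ A := by
  set B := stressSupport ℝ (rigRow d p) (D.erase f)
  have hBD : B ⊆ D.erase f := fun e he => (mem_stressSupport.mp he).1
  have hB : IsKFoldCircuit d p B (k - 1) := by
    have := isKFoldCircuit_stressSupport (p := p) (D.erase f)
    rwa [show finrank ℝ (stresses ℝ (rigRow d p) (D.erase f)) = k - 1 by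
      have := hD.finrank_stresses_erase hf; omega] at this
  exact ⟨D \ B, ⟨B, hBD.trans (erase_subset f D), hB, rfl⟩,
    mem_sdiff.mpr ⟨hf, fun hfB => notMem_erase f D (hBD hfB)⟩⟩

theorem IsPrincipalPart.subset (hA : IsPrincipalPart d p D k A) : A ⊆ D := by
  obtain ⟨B, -, -, rfl⟩ := hA
  exact sdiff_subset

theorem IsPrincipalPart.stresses_erase_eq (hD : IsKFoldCircuit d p D k)
    (hA : IsPrincipalPart d p D k A) {f : Sym2 V} (hf : f ∈ A) :
    stresses ℝ (rigRow d p) (D.erase f) = stresses ℝ (rigRow d p) (D \ A) := by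
  obtain ⟨B, hBD, hB, rfl⟩ := hA
  rw [Finset.sdiff_sdiff_eq_self hBD]
  refine (Submodule.eq_of_le_of_finrank_eq (stresses_mono fun e he => ?_) ?_).symm
  · exact mem_erase.mpr ⟨fun hef => (mem_sdiff.mp hf).2 (hef ▸ he), hBD he⟩
  · have := hD.finrank_stresses_erase (sdiff_subset hf)
    rw [(isKFoldCircuit_iff.mp hB).1]
    omega

theorem IsPrincipalPart.apply_eq_zero_of_apply_eq_zero (hD : IsKFoldCircuit d p D k)
    (hA : IsPrincipalPart d p D k A) {x : Sym2 V → ℝ} (hx : x ∈ stresses ℝ (rigRow d p) D)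
    {f : Sym2 V} (hf : f ∈ A) (hxf : x f = 0) {e : Sym2 V} (he : e ∈ A) : x e = 0 := by
  have hxA : x ∈ stresses ℝ (rigRow d p) (D \ A) := by
    rw [← hA.stresses_erase_eq hD hf]
    exact mem_stresses_erase.mpr ⟨hx, hxf⟩
  exact hxA.1 e fun heA => (mem_sdiff.mp heA).2 he

theorem IsPrincipalPart.eq_of_mem (hD : IsKFoldCircuit d p D k)
    (hA : IsPrincipalPart d p D k A) (hA' : IsPrincipalPart d p D k A') {f : Sym2 V}
    (hf : f ∈ A) (hf' : f ∈ A') : A = A' := by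
  have h := (hA.stresses_erase_eq hD hf).symm.trans (hA'.stresses_erase_eq hD hf')
  obtain ⟨B, hBD, hB, rfl⟩ := hA
  obtain ⟨B', hB'D, hB', rfl⟩ := hA'
  rw [Finset.sdiff_sdiff_eq_self hBD, Finset.sdiff_sdiff_eq_self hB'D] at h
  rw [(hB.subset_of_stresses_le h.le).antisymm (hB'.subset_of_stresses_le h.ge)]

theorem IsPrincipalPart.nonempty (hD : IsKFoldCircuit d p D k) (hk : k ≠ 0)
    (hA : IsPrincipalPart d p D k A) : A.Nonempty := by
  obtain ⟨B, hBD, hB, rfl⟩ := hA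
  refine nonempty_iff_ne_empty.mpr fun hDB => ?_
  rw [sdiff_eq_empty_iff_subset] at hDB
  have := (isKFoldCircuit_iff.mp hB).1
  rw [hBD.antisymm hDB, (isKFoldCircuit_iff.mp hD).1] at this
  omega

theorem IsPrincipalPart.exists_stress (hD : IsKFoldCircuit d p D k) (hk : k ≠ 0)
    (hA : IsPrincipalPart d p D k A) :
    ∃ l ∈ stresses ℝ (rigRow d p) D, (∀ e ∈ A, l e ≠ 0) ∧
      ∀ x ∈ stresses ℝ (rigRow d p) D, ∃ c : ℝ, ∀ e ∈ A, x e = c * l e := by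
  obtain ⟨f, hf⟩ := hA.nonempty hD hk
  obtain ⟨l, hl, hlf⟩ := (isKFoldCircuit_iff.mp hD).2 f (hA.subset hf)
  refine ⟨l, hl, fun e he hle => hlf (hA.apply_eq_zero_of_apply_eq_zero hD hl he hle hf),
    fun x hx => ⟨x f / l f, fun e he => ?_⟩⟩
  have := hA.apply_eq_zero_of_apply_eq_zero hD (sub_mem hx (Submodule.smul_mem _ (x f / l f) hl))
    hf (by simp [hlf]) he
  simpa [sub_eq_zero] using this

theorem IsPrincipalPart.stresses_eq_bot (hD : IsKFoldCircuit d p D k) (hk : 2 ≤ k)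
    (hconn : ∀ e ∈ D, ∀ f ∈ D, e ≠ f →
      ∃ C : Finset (Sym2 V), IsCircuit d p C ∧ C ⊆ D ∧ e ∈ C ∧ f ∈ C)
    (hA : IsPrincipalPart d p D k A) : stresses ℝ (rigRow d p) A = ⊥ := by
  refine (Submodule.eq_bot_iff _).mpr fun x hx => by_contra fun hx0 => ?_
  obtain ⟨e, hxe⟩ : ∃ e, x e ≠ 0 := Function.ne_iff.mp hx0
  have heA : e ∈ A := by_contra fun h => hxe (hx.1 e h)
  obtain ⟨f, hfD, hfA⟩ : ∃ f ∈ D, f ∉ A := by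
    obtain ⟨B, hBD, hB, rfl⟩ := hA
    obtain ⟨f, hf⟩ : B.Nonempty := card_pos.mp (by have := hB.2; omega)
    exact ⟨f, hBD hf, fun h => (mem_sdiff.mp h).2 hf⟩
  obtain ⟨C, hC, hCD, heC, hfC⟩ := hconn e (hA.subset heA) f hfD fun h => hfA (h ▸ heA)
  obtain ⟨y, hy, hye⟩ := (isKFoldCircuit_iff.mp hC).2 e heC
  set z := y - (y e / x e) • x
  have hzA : ∀ g ∈ A, z g = 0 := fun g hg =>
    hA.apply_eq_zero_of_apply_eq_zero hD (sub_mem (stresses_mono hCD hy)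
      (Submodule.smul_mem _ _ (stresses_mono hA.subset hx))) heA (by simp [hxe]) hg
  -- `z` is `y` off `A`, so it is a stress of the circuit `C` vanishing at `e`
  have hz : z ∈ stresses ℝ (rigRow d p) C := by
    refine ⟨fun g hg => ?_, by simp [z, hy.2, hx.2]⟩
    by_cases hgA : g ∈ A
    · exact hzA g hgA
    · simp [z, hy.1 g hg, hx.1 g hgA]
  have hyf : y f = 0 := by
    simpa [z, hx.1 f hfA] using congrFun (hC.eq_zero_of_apply_eq_zero hz heC (hzA e heA)) f
  exact hye (congrFun (hC.eq_zero_of_apply_eq_zero hy hfC hyf) e)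

open Classical in
noncomputable def IsKFoldCircuit.principalPartition (hD : IsKFoldCircuit d p D k) (hk : k ≠ 0) :
    Finpartition D :=
  Finpartition.ofExistsUnique {A ∈ D.powerset | IsPrincipalPart d p D k A}
    (fun _ hA => (mem_filter.mp hA).2.subset)
    (fun f hf => by
      obtain ⟨A, hA, hfA⟩ := hD.exists_isPrincipalPart_mem hf
      refine ⟨A, ⟨mem_filter.mpr ⟨mem_powerset.mpr hA.subset, hA⟩, hfA⟩, ?_⟩
      rintro A' ⟨hA', hfA'⟩
      exact (mem_filter.mp hA').2.eq_of_mem hD hA hfA' hfA)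
    fun h => by simpa using (mem_filter.mp h).2.nonempty hD hk

theorem IsKFoldCircuit.mem_principalPartition_parts (hD : IsKFoldCircuit d p D k) (hk : k ≠ 0) :
    A ∈ (hD.principalPartition hk).parts ↔ IsPrincipalPart d p D k A := by
  classical
  simp only [principalPartition, Finpartition.ofExistsUnique_parts, mem_filter, mem_powerset]
  exact ⟨And.right, fun hA => ⟨hA.subset, hA⟩⟩

end KFoldCircuit

section Rigidity

variable {d : ℕ} {V : Type*} [DecidableEq V] {p : V → Fin d → ℝ}

theorem rigRow_mk_apply (x y w : V) (i : Fin d) :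
    rigRow d p s(x, y) (w, i) =
      ((if w = x then 1 else 0) - (if w = y then 1 else 0)) * (p x i - p y i) :=
  rfl

theorem rigRow_apply_of_notMem {e : Sym2 V} {w : V} (hw : w ∉ e) (i : Fin d) :
    rigRow d p e (w, i) = 0 := by
  induction e using Sym2.ind with
  | _ x y =>
    rw [Sym2.mem_iff, not_or] at hw
    simp [rigRow_mk_apply, hw.1, hw.2]

theorem rigRow_mk_ne_zero {u v : V} (huv : u ≠ v) (hpuv : p u ≠ p v) :
    rigRow d p s(u, v) ≠ 0 := by
  obtain ⟨j, hj⟩ := Function.ne_iff.mp hpuv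
  refine Function.ne_iff.mpr ⟨(u, j), ?_⟩
  simpa [rigRow_mk_apply, huv, sub_eq_zero] using hj

variable [Fintype V]

theorem rigRow_mk_dotProduct (x y : V) (m : V × Fin d → ℝ) :
    rigRow d p s(x, y) ⬝ᵥ m = ∑ i, (p x i - p y i) * (m (x, i) - m (y, i)) := by
  simp only [dotProduct, Fintype.sum_prod_type, rigRow_mk_apply]
  rw [Finset.sum_comm]
  refine Finset.sum_congr rfl fun i _ => ?_
  simp only [sub_mul, ite_mul, one_mul, zero_mul, Finset.sum_sub_distrib, Finset.sum_ite_eq',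
    Finset.mem_univ, if_true]
  ring

/-- `hm` says that `m` is an infinitesimal motion of the complete graph. -/
theorem dotProduct_eq_zero_of_mem_span_rigRow {m : V × Fin d → ℝ}
    (hm : ∀ x y, ∑ i, (p x i - p y i) * (m (x, i) - m (y, i)) = 0) {ρ : V × Fin d → ℝ}
    (hρ : ρ ∈ Submodule.span ℝ (Set.range (rigRow d p))) : ρ ⬝ᵥ m = 0 := by
  induction hρ using Submodule.span_induction with
  | mem _ h =>
    obtain ⟨e, rfl⟩ := h
    induction e using Sym2.ind with
    | _ x y => rw [rigRow_mk_dotProduct, hm]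
  | zero => exact zero_dotProduct m
  | add _ _ _ _ h₁ h₂ => rw [add_dotProduct, h₁, h₂, add_zero]
  | smul _ _ _ h => rw [smul_dotProduct, h, smul_zero]

theorem exists_eq_smul_rigRow_of_mem_span {u v : V} (huv : u ≠ v) (hpuv : p u ≠ p v)
    {ρ : V × Fin d → ℝ} (hρ : ρ ∈ Submodule.span ℝ (Set.range (rigRow d p)))
    (hρ0 : ∀ w, w ≠ u → w ≠ v → ∀ i, ρ (w, i) = 0) :
    ∃ t : ℝ, ρ = t • rigRow d p s(u, v) := by
  have hdot : ∀ m, ρ ⬝ᵥ m = ∑ i, (ρ (u, i) * m (u, i) + ρ (v, i) * m (v, i)) := by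
    intro m
    rw [dotProduct, Fintype.sum_prod_type, Fintype.sum_eq_add u v huv, ← Finset.sum_add_distrib]
    rintro w ⟨hwu, hwv⟩
    simp [hρ0 w hwu hwv]
  -- the translations along the axes
  have htrans : ∀ a, ρ (v, a) = -ρ (u, a) := by
    intro a
    have := dotProduct_eq_zero_of_mem_span_rigRow (m := fun wi => if wi.2 = a then 1 else 0)
      (fun x y => by simp) hρ
    rw [hdot] at this
    simp only [mul_ite, mul_one, mul_zero, sum_add_distrib, sum_ite_eq', mem_univ, if_true] at this
    linarith
  -- the rotations in the coordinate planes
  have hrot : ∀ a b, ρ (u, a) * (p u b - p v b) = ρ (u, b) * (p u a - p v a) := by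
    intro a b
    have := dotProduct_eq_zero_of_mem_span_rigRow
      (m := fun wi => (if wi.2 = a then p wi.1 b else 0) - if wi.2 = b then p wi.1 a else 0)
      (fun x y => by
        simp only [mul_sub, mul_ite, mul_zero, sum_sub_distrib, sum_ite_eq', mem_univ, if_true]
        ring) hρ
    rw [hdot] at this
    simp only [mul_sub, mul_ite, mul_zero, htrans, neg_mul, sum_add_distrib, sum_sub_distrib,
      sum_ite_eq', mem_univ, if_true, sub_neg_eq_add] at this
    linarith
  obtain ⟨j, hj⟩ := Function.ne_iff.mp hpuv
  have hj' : p u j - p v j ≠ 0 := sub_ne_zero.mpr hj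
  refine ⟨ρ (u, j) / (p u j - p v j), funext fun ⟨w, i⟩ => ?_⟩
  have hu : ρ (u, i) = ρ (u, j) / (p u j - p v j) * (p u i - p v i) := by
    field_simp
    linarith [hrot i j]
  rw [Pi.smul_apply, smul_eq_mul, rigRow_mk_apply]
  by_cases hwu : w = u
  · subst hwu
    simp [huv, hu]
  · by_cases hwv : w = v
    · subst hwv
      simp only [htrans, hu, Ne.symm huv, if_true, if_false, zero_sub, neg_mul, one_mul, neg_sub]
      ring
    · simp [hwu, hwv, hρ0 w hwu hwv]

theorem linearCombination_rigRow_apply_congr {σ σ' : Sym2 V → ℝ} {w : V}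
    (h : ∀ e, w ∈ e → σ e = σ' e) (i : Fin d) :
    Fintype.linearCombination ℝ (rigRow d p) σ (w, i) =
      Fintype.linearCombination ℝ (rigRow d p) σ' (w, i) := by
  simp only [Fintype.linearCombination_apply, Finset.sum_apply, Pi.smul_apply, smul_eq_mul]
  refine Finset.sum_congr rfl fun e _ => ?_
  by_cases hwe : w ∈ e
  · rw [h e hwe]
  · simp [rigRow_apply_of_notMem hwe]

variable {D A A' : Finset (Sym2 V)} {k : ℕ}

theorem Monochromatic.forall_mem_or_forall_notMem {w : V} (hD : IsKFoldCircuit d p D k)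
    (hw : Monochromatic d p D k w) (hA : IsPrincipalPart d p D k A) :
    (∀ e ∈ D, w ∈ e → e ∈ A) ∨ ∀ e ∈ A, w ∉ e := by
  obtain ⟨Aw, hAw, hall⟩ := hw
  by_cases h : ∃ e ∈ A, w ∈ e
  · obtain ⟨e, heA, hwe⟩ := h
    left
    rwa [← hAw.eq_of_mem hD hA (hall e (hA.subset heA) hwe) heA]
  · exact Or.inr fun e heA hwe => h ⟨e, heA, hwe⟩

theorem IsPrincipalPart.exists_linearCombination_indicator_eq_smul (hD : IsKFoldCircuit d p D k)
    (hA : IsPrincipalPart d p D k A) {u v : V} (huv : u ≠ v) (hpuv : p u ≠ p v)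
    (hmono : ∀ w, w ≠ u → w ≠ v → Monochromatic d p D k w) {l : Sym2 V → ℝ}
    (hl : l ∈ stresses ℝ (rigRow d p) D) :
    ∃ t : ℝ, Fintype.linearCombination ℝ (rigRow d p) ((A : Set (Sym2 V)).indicator l) =
      t • rigRow d p s(u, v) := by
  refine exists_eq_smul_rigRow_of_mem_span huv hpuv
    (Fintype.range_linearCombination ℝ (rigRow d p) ▸ LinearMap.mem_range_self _ _)
    fun w hwu hwv i => ?_
  rcases (hmono w hwu hwv).forall_mem_or_forall_notMem hD hA with hin | hout
  · rw [linearCombination_rigRow_apply_congr (σ' := l) (fun e hwe => ?_), hl.2, Pi.zero_apply]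
    by_cases heD : e ∈ D
    · simp [hin e heD hwe]
    · simp [hl.1 e heD]
  · rw [linearCombination_rigRow_apply_congr (σ' := 0) (fun e hwe => ?_), map_zero,
      Pi.zero_apply]
    have heA : e ∉ A := fun heA => hout e heA hwe
    simp [heA]

theorem IsPrincipalPart.esupp_inter_subset (hD : IsKFoldCircuit d p D k)
    (hA : IsPrincipalPart d p D k A) (hA' : IsPrincipalPart d p D k A') (hne : A ≠ A')
    {u v : V} (hmono : ∀ w, w ≠ u → w ≠ v → Monochromatic d p D k w) :
    esupp A ∩ esupp A' ⊆ {u, v} := by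
  intro w hw
  simp only [esupp, mem_inter, mem_filter, mem_univ, true_and] at hw
  obtain ⟨⟨e, heA, hwe⟩, e', he'A', hwe'⟩ := hw
  by_contra hwuv
  simp only [mem_insert, mem_singleton, not_or] at hwuv
  rcases (hmono w hwuv.1 hwuv.2).forall_mem_or_forall_notMem hD hA with hin | hout
  · exact hne (hA.eq_of_mem hD hA' (hin e' (hA'.subset he'A') hwe') he'A')
  · exact hout e heA hwe

theorem IsPrincipalPart.exists_stress_load (hD : IsKFoldCircuit d p D k) (hk : 2 ≤ k)
    (hconn : ∀ e ∈ D, ∀ f ∈ D, e ≠ f →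
      ∃ C : Finset (Sym2 V), IsCircuit d p C ∧ C ⊆ D ∧ e ∈ C ∧ f ∈ C)
    (hA : IsPrincipalPart d p D k A) {u v : V} (huv : u ≠ v) (hpuv : p u ≠ p v)
    (hmono : ∀ w, w ≠ u → w ≠ v → Monochromatic d p D k w) :
    ∃ (l : Sym2 V → ℝ) (t : ℝ), (∀ e ∈ A, l e ≠ 0) ∧
      (∀ x ∈ stresses ℝ (rigRow d p) D, ∃ c : ℝ, ∀ e ∈ A, x e = c * l e) ∧
      Fintype.linearCombination ℝ (rigRow d p) ((A : Set (Sym2 V)).indicator l) =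
        t • rigRow d p s(u, v) ∧ t ≠ 0 := by
  obtain ⟨l, hlD, hl_ne, hl⟩ := hA.exists_stress hD (by omega)
  obtain ⟨t, hload⟩ := hA.exists_linearCombination_indicator_eq_smul hD huv hpuv hmono hlD
  refine ⟨l, t, hl_ne, hl, hload, fun ht => ?_⟩
  have hmem : (A : Set (Sym2 V)).indicator l ∈ stresses ℝ (rigRow d p) A :=
    ⟨fun e he => by simp [he], by rw [hload, ht, zero_smul]⟩
  rw [hA.stresses_eq_bot hD hk hconn, Submodule.mem_bot] at hmem
  obtain ⟨e, he⟩ := hA.nonempty hD (by omega)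
  exact hl_ne e he (by simpa [he] using congrFun hmem e)

theorem isCircuit_insert {g : Sym2 V} (hA : stresses ℝ (rigRow d p) A = ⊥) (hg : g ∉ A)
    {l : Sym2 V → ℝ} (hl : ∀ e ∈ A, l e ≠ 0) {t : ℝ}
    (hload : Fintype.linearCombination ℝ (rigRow d p) ((A : Set (Sym2 V)).indicator l) =
      t • rigRow d p g) (ht : t ≠ 0) :
    IsCircuit d p (insert g A) := by
  set κ := (A : Set (Sym2 V)).indicator l - Pi.single g t
  have hκ : κ ∈ stresses ℝ (rigRow d p) (insert g A) := by
    refine ⟨fun e he => ?_, by simp [κ, hload]⟩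
    rw [mem_insert, not_or] at he
    simp [κ, he.1, he.2]
  have hκg : κ g ≠ 0 := by simpa [κ, hg] using ht
  rw [IsCircuit, isKFoldCircuit_iff, stresses_insert_eq_span hA hκ hκg,
    finrank_span_singleton fun h => hκg (by simp [h])]
  refine ⟨rfl, fun e he => ⟨κ, Submodule.mem_span_singleton_self κ, ?_⟩⟩
  rcases mem_insert.mp he with rfl | he
  · exact hκg
  · simpa [κ, he, show e ≠ g from fun h => hg (h ▸ he)] using hl e he

theorem esupp_insert_mk (u v : V) (F : Finset (Sym2 V)) :
    esupp (insert s(u, v) F) = {u, v} ∪ esupp F := by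
  ext w
  simp [esupp, or_and_right, exists_or, eq_comm, or_assoc]

theorem exists_fin_circuit_family (P : Finpartition D) {𝒬 : Finset (Finset (Sym2 V))}
    (h𝒬 : 𝒬 ⊆ P.parts) {n : ℕ} (hn : 𝒬.card = n) (hn0 : n ≠ 0) {u v : V}
    (huv𝒬 : ∀ A ∈ 𝒬, s(u, v) ∉ A)
    (hcirc : ∀ A ∈ P.parts, s(u, v) ∉ A → IsCircuit d p (insert s(u, v) A))
    (hsupp : ∀ A ∈ P.parts, ∀ A' ∈ P.parts, A ≠ A' → esupp A ∩ esupp A' ⊆ {u, v}) :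
    ∃ C : Fin n → Finset (Sym2 V), (∀ i, IsCircuit d p (C i) ∧ s(u, v) ∈ C i) ∧
      (∀ i j, i ≠ j → esupp (C i) ∩ esupp (C j) = {u, v} ∧ C i ∩ C j = {s(u, v)}) ∧
      Finset.univ.sup C = insert s(u, v) (𝒬.sup id) := by
  set a := (𝒬.equivFinOfCardEq hn).symm
  refine ⟨fun i => insert s(u, v) (a i), fun i => ⟨hcirc _ (h𝒬 (a i).2) (huv𝒬 _ (a i).2),
    mem_insert_self _ _⟩, fun i j hij => ?_, ?_⟩
  · have hne : (a i : Finset (Sym2 V)) ≠ a j := fun h => hij (a.injective (Subtype.ext h))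
    have hdisj : Disjoint (a i : Finset (Sym2 V)) (a j) := P.disjoint (h𝒬 (a i).2) (h𝒬 (a j).2) hne
    rw [esupp_insert_mk, esupp_insert_mk, ← union_inter_distrib_left,
      union_eq_left.mpr (hsupp _ (h𝒬 (a i).2) _ (h𝒬 (a j).2) hne), ← insert_inter_distrib,
      disjoint_iff_inter_eq_empty.mp hdisj]
    exact ⟨rfl, rfl⟩
  · ext f
    simp only [mem_sup, mem_univ, true_and, mem_insert, id]
    constructor
    · rintro ⟨i, rfl | hf⟩
      · exact Or.inl rfl
      · exact Or.inr ⟨_, (a i).2, hf⟩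
    · rintro (rfl | ⟨A, hA, hf⟩)
      · exact ⟨⟨0, Nat.pos_of_ne_zero hn0⟩, Or.inl rfl⟩
      · exact ⟨a.symm ⟨A, hA⟩, Or.inr (by simpa [a] using hf)⟩

end Rigidity

theorem kfold_circuit_two_technicolour_structure_general
    (d k : ℕ) (hd : 1 ≤ d) (hk : 2 ≤ k)
    {V : Type*} [Fintype V] [DecidableEq V]
    (D : Finset (Sym2 V))
    (p : V → Fin d → ℝ) (hp : Generic d p)
    (hD : IsKFoldCircuit d p D k)
    (hconn : ∀ e ∈ D, ∀ f ∈ D, e ≠ f →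
      ∃ C : Finset (Sym2 V), IsCircuit d p C ∧ C ⊆ D ∧ e ∈ C ∧ f ∈ C)
    (u v : V) (huv : u ≠ v)
    (htech : {w : V | ¬ Monochromatic d p D k w} = {u, v}) :
    (s(u, v) ∈ D →
      ∃ C : Fin k → Finset (Sym2 V),
        (∀ i, IsCircuit d p (C i) ∧ s(u, v) ∈ C i) ∧
        (∀ i j, i ≠ j → esupp (C i) ∩ esupp (C j) = {u, v} ∧
          C i ∩ C j = {s(u, v)}) ∧
        D = Finset.univ.sup C) ∧
    (s(u, v) ∉ D →
      ∃ C : Fin (k+1) → Finset (Sym2 V),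
        (∀ i, IsCircuit d p (C i) ∧ s(u, v) ∈ C i) ∧
        (∀ i j, i ≠ j → esupp (C i) ∩ esupp (C j) = {u, v} ∧
          C i ∩ C j = {s(u, v)}) ∧
        D = (Finset.univ.sup C).erase (s(u, v))) := by
  have hpuv : p u ≠ p v := fun h =>
    huv (congrArg Prod.fst (hp.injective (a₁ := (u, ⟨0, hd⟩)) (a₂ := (v, ⟨0, hd⟩)) (congrFun h _)))
  have hmono : ∀ w, w ≠ u → w ≠ v → Monochromatic d p D k w := fun w hwu hwv =>
    by_contra fun h => by simpa [hwu, hwv] using htech.subset h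
  set P := hD.principalPartition (by omega)
  have hparts {A} : A ∈ P.parts ↔ IsPrincipalPart d p D k A := hD.mem_principalPartition_parts _
  choose! l t hl_ne hl hload ht using fun A (hA : A ∈ P.parts) =>
    (hparts.mp hA).exists_stress_load hD hk hconn huv hpuv hmono
  have hcard : P.parts.card = k + 1 := by
    obtain ⟨f, hf⟩ : D.Nonempty := card_pos.mp (by have := hD.2; omega)
    obtain ⟨A, hA, -⟩ := P.exists_mem hf
    rw [← finrank_stresses_add_one_eq_card (rigRow_mk_ne_zero huv hpuv) hl_ne hl hload
      ⟨A, hA, ht A hA⟩, (isKFoldCircuit_iff.mp hD).1]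
  have hcirc A (hA : A ∈ P.parts) (huvA : s(u, v) ∉ A) : IsCircuit d p (insert s(u, v) A) :=
    isCircuit_insert ((hparts.mp hA).stresses_eq_bot hD hk hconn) huvA (hl_ne A hA) (hload A hA)
      (ht A hA)
  have hsupp A (hA : A ∈ P.parts) A' (hA' : A' ∈ P.parts) (hne : A ≠ A') :=
    (hparts.mp hA).esupp_inter_subset hD (hparts.mp hA') hne hmono
  refine ⟨fun huvD => ?_, fun huvD => ?_⟩
  · obtain ⟨A₀, hA₀, huvA₀⟩ := P.exists_mem huvD
    obtain rfl : A₀ = {s(u, v)} := eq_singleton_of_stresses_eq_bot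
      ((hparts.mp hA₀).stresses_eq_bot hD hk hconn) huvA₀ (hl_ne A₀ hA₀) (hload A₀ hA₀)
    obtain ⟨C, hC, hCC, hsup⟩ := exists_fin_circuit_family P (erase_subset _ P.parts)
      (by rw [card_erase_of_mem hA₀, hcard, Nat.add_sub_cancel]) (by omega)
      (fun A hA huvA => ne_of_mem_erase hA (P.eq_of_mem_parts (mem_of_mem_erase hA) hA₀ huvA huvA₀))
      hcirc hsupp
    exact ⟨C, hC, hCC, by rw [hsup, P.insert_sup_parts_erase hA₀]⟩
  · obtain ⟨C, hC, hCC, hsup⟩ := exists_fin_circuit_family P subset_rfl hcard (by omega)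
      (fun A hA huvA => huvD (P.subset hA huvA)) hcirc hsupp
    refine ⟨C, hC, hCC, ?_⟩
    rw [hsup, P.sup_parts, erase_insert huvD]

/-- Proposition 3.11: structure of `R_d`-connected `k`-fold `R_d`-circuits with
exactly two technicolour vertices `u, v`. -/
theorem kfold_circuit_two_technicolour_structure
    (d k : ℕ) (hd : 1 ≤ d) (hk : 2 ≤ k)
    {V : Type*} [Fintype V] [DecidableEq V]
    (D : Finset (Sym2 V)) (hsimple : ∀ e ∈ D, ¬ e.IsDiag)
    (hcov : ∀ w : V, ∃ e ∈ D, w ∈ e)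
    (p : V → Fin d → ℝ) (hp : Generic d p)
    (hD : IsKFoldCircuit d p D k)
    (hconn : ∀ e ∈ D, ∀ f ∈ D, e ≠ f →
      ∃ C : Finset (Sym2 V), IsCircuit d p C ∧ C ⊆ D ∧ e ∈ C ∧ f ∈ C)
    (u v : V) (huv : u ≠ v)
    (htech : {w : V | ¬ Monochromatic d p D k w} = {u, v}) :
    (s(u, v) ∈ D →
      ∃ C : Fin k → Finset (Sym2 V),
        (∀ i, IsCircuit d p (C i) ∧ s(u, v) ∈ C i) ∧
        (∀ i j, i ≠ j → esupp (C i) ∩ esupp (C j) = {u, v} ∧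
          C i ∩ C j = {s(u, v)}) ∧
        D = Finset.univ.sup C) ∧
    (s(u, v) ∉ D →
      ∃ C : Fin (k+1) → Finset (Sym2 V),
        (∀ i, IsCircuit d p (C i) ∧ s(u, v) ∈ C i) ∧
        (∀ i j, i ≠ j → esupp (C i) ∩ esupp (C j) = {u, v} ∧
          C i ∩ C j = {s(u, v)}) ∧
        D = (Finset.univ.sup C).erase (s(u, v))) :=
  kfold_circuit_two_technicolour_structure_general d k hd hk D p hp hD hconn u v huv htech
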